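/- Let A be a finite-dimensional k-algebra, and let σ and π be k-algebra automorphisms of A with σ inner. Then the twisted trivial extensions Δ_{σ∘π}A and Δ_πA are isomorphic as k-algebras. -/

import Mathlib

/-- The multiplication of the twisted trivial extension `Δ_τA = A ⊕ D(A)_τ`, modeled on
`A × (A →ₗ[k] k)`: `(a, f)(b, g) = (ab, a·g + f·b)`, where `D(A)_τ` carries the twisted
bimodule structure `(a·f·b)(x) = f(τ(b)xa)`, so `(a·g)(x) = g(xa)` and
`(f·b)(x) = f(τ(b)x)`.  Here `τ : A → A` is the twisting map. -/
def twTrivExtMul {k A : Type*} [Field k] [Ring A] [Algebra k A] (τ : A → A)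
    (p q : A × (A →ₗ[k] k)) : A × (A →ₗ[k] k) :=
  (p.1 * q.1, q.2 ∘ₗ LinearMap.mulRight k p.1 + p.2 ∘ₗ LinearMap.mulLeft k (τ q.1))

/-
Conjugation by a unit `u` changes the twist only up to the bimodule isomorphism
`D(A)_{u τ(-) u⁻¹} ≅ D(A)_τ`, `f ↦ f(u · -)`: indeed `f(u τ(b) u⁻¹ · u x) = f(u · τ(b) x)`.
Together with the identity on `A` this is an isomorphism of the trivial extensions.
-/

namespace TwTrivExt

variable {k A : Type*} [Field k] [Ring A] [Algebra k A]

def equivOfUnit (u : Aˣ) : (A × (A →ₗ[k] k)) ≃ₗ[k] (A × (A →ₗ[k] k)) :=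
  (LinearEquiv.refl k A).prodCongr (u.mulLeftLinearEquiv k A).dualMap

@[simp]
theorem equivOfUnit_apply (u : Aˣ) (p : A × (A →ₗ[k] k)) :
    equivOfUnit u p = (p.1, p.2 ∘ₗ LinearMap.mulLeft k (u : A)) :=
  rfl

theorem equivOfUnit_twTrivExtMul_conj (τ : A → A) (u : Aˣ) (p q : A × (A →ₗ[k] k)) :
    equivOfUnit u (twTrivExtMul (fun x => u * τ x * ↑u⁻¹) p q) =
      twTrivExtMul τ (equivOfUnit u p) (equivOfUnit u q) := by
  refine Prod.ext rfl (LinearMap.ext fun x => ?_)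
  simp [twTrivExtMul, mul_assoc]

theorem equivOfUnit_one (u : Aˣ) :
    equivOfUnit u ((1 : A), (0 : A →ₗ[k] k)) = ((1 : A), (0 : A →ₗ[k] k)) := by
  simp

end TwTrivExt

theorem stmt_14_general (k A : Type*) [Field k] [Ring A] [Algebra k A]
    (σ π : A ≃ₐ[k] A) (u : Aˣ) (hσ : ∀ a : A, σ a = (u : A) * a * (↑u⁻¹ : A)) :
    -- there is a `k`-linear bijection `Φ : Δ_{σ∘π}A → Δ_πA` which is multiplicative and
    -- unital, i.e. a `k`-algebra isomorphism
    ∃ Φ : (A × (A →ₗ[k] k)) ≃ₗ[k] (A × (A →ₗ[k] k)),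
      (∀ p q : A × (A →ₗ[k] k),
        Φ (twTrivExtMul (fun x => σ (π x)) p q) = twTrivExtMul (fun x => π x) (Φ p) (Φ q)) ∧
      Φ ((1 : A), (0 : A →ₗ[k] k)) = ((1 : A), (0 : A →ₗ[k] k)) := by
  have hτ : (fun x => σ (π x)) = fun x => u * π x * ↑u⁻¹ := funext fun x => hσ (π x)
  refine ⟨TwTrivExt.equivOfUnit u, fun p q => ?_, TwTrivExt.equivOfUnit_one u⟩
  rw [hτ]
  exact TwTrivExt.equivOfUnit_twTrivExtMul_conj (fun x => π x) u p q

/-- Let `A` be a finite-dimensional `k`-algebra, and let `σ` and `π` be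
`k`-algebra automorphisms of `A` with `σ` inner.  Then the twisted trivial extensions
`Δ_{σ∘π}A` and `Δ_πA` are isomorphic as `k`-algebras. -/
theorem stmt_14 (k A : Type*) [Field k] [Ring A] [Algebra k A] [FiniteDimensional k A]
    (σ π : A ≃ₐ[k] A) (u : Aˣ) (hσ : ∀ a : A, σ a = (u : A) * a * (↑u⁻¹ : A)) :
    -- there is a `k`-linear bijection `Φ : Δ_{σ∘π}A → Δ_πA` which is multiplicative and
    -- unital, i.e. a `k`-algebra isomorphism
    ∃ Φ : (A × (A →ₗ[k] k)) ≃ₗ[k] (A × (A →ₗ[k] k)),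
      (∀ p q : A × (A →ₗ[k] k),
        Φ (twTrivExtMul (fun x => σ (π x)) p q) = twTrivExtMul (fun x => π x) (Φ p) (Φ q)) ∧
      Φ ((1 : A), (0 : A →ₗ[k] k)) = ((1 : A), (0 : A →ₗ[k] k)) :=
  stmt_14_general k A σ π u hσ
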